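/- Let r, r* > 0 with r < r*, and θ, θ* ∈ [0,π], φ, φ* ∈ ℝ. Set 𝐫 = (r sinθ cosφ, r sinθ sinφ, r cosθ) and 𝐫* defined analogously. Then 1/‖𝐫−𝐫*‖ = Σ_{n=0}^∞ (rⁿ/(r*)^{n+1}) · P_n(cosθ cosθ* + sinθ sinθ* cos(φ−φ*)), where P_n is the Legendre polynomial, and the series converges absolutely. -/

import Mathlib

open Real

/-- The Legendre polynomial `P_n`, via the Rodrigues formula. -/
noncomputable def legendrePoly (n : ℕ) (x : ℝ) : ℝ :=
  (1 / (2^n * (Nat.factorial n : ℝ))) * iteratedDeriv n (fun y => (y^2 - 1)^n) x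

/-!
For `|x| ≤ 1` the quadratic `1 - 2xz + z²` stays off the slit `(-∞, 0]` on the unit disc, so
`(1 - 2xz + z²)^{-1/2}` is holomorphic there and its Taylor series at `0` converges absolutely on
the whole disc. Near `0` the binomial series of `(1 - w)^{-1/2}` at `w = 2xz - z²` can be
regrouped by powers of `z`, and the coefficient of `zⁿ` is exactly what Rodrigues' formula expands
to, so the Taylor coefficients are the `P_n(x)`. By the law of cosines
`‖𝐫 - 𝐫*‖² = r*² (1 - 2xh + h²)` with `h = r / r*`.
-/

open Finset

theorem descPochhammer_smeval_natCast_sub_half {K : Type*} [Field K] [CharZero K] (n : ℕ) :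
    (descPochhammer ℤ n).smeval ((n : K) - 1 / 2) * 4 ^ n * n.factorial
      = (2 * n).factorial := by
  induction n with
  | zero => simp
  | succ n ih =>
    have hstep : (descPochhammer ℤ (n + 1)).smeval (((n + 1 : ℕ) : K) - 1 / 2)
        = ((n : K) + 1 / 2) * (descPochhammer ℤ n).smeval ((n : K) - 1 / 2) := by
      rw [descPochhammer_succ_left, Polynomial.smeval_mul, Polynomial.smeval_comp,
        Polynomial.smeval_sub, Polynomial.smeval_X, Polynomial.smeval_one]
      simp only [pow_one, pow_zero, one_smul]
      push_cast; ring_nf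
    rw [hstep, show 2 * (n + 1) = 2 * n + 1 + 1 by ring, Nat.factorial_succ, Nat.factorial_succ,
      Nat.factorial_succ]
    push_cast
    linear_combination (2 * ((n : K) + 1) * (2 * n + 1)) * ih

theorem Ring.choose_half_add_natCast_sub_one {K : Type*} [Field K] [CharZero K] (n : ℕ) :
    Ring.choose ((1 / 2 : K) + n - 1) n = n.centralBinom / 4 ^ n := by
  have h := descPochhammer_smeval_natCast_sub_half (K := K) n
  rw [Ring.choose_eq_smul, smul_eq_mul, show (1 / 2 : K) + n - 1 = n - 1 / 2 by ring,
    Nat.centralBinom, Nat.cast_choose K (by omega : n ≤ 2 * n), show 2 * n - n = n by omega,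
    ← h]
  have : (n.factorial : K) ≠ 0 := Nat.cast_ne_zero.mpr n.factorial_ne_zero
  field_simp

theorem iteratedDeriv_sq_sub_one_pow (n : ℕ) (x : ℝ) :
    iteratedDeriv n (fun y : ℝ => (y ^ 2 - 1) ^ n) x
      = ∑ i ∈ range (n + 1),
          (-1 : ℝ) ^ (n - i) * n.choose i * (2 * i).descFactorial n * x ^ (2 * i - n) := by
  have hexpand : (fun y : ℝ => (y ^ 2 - 1) ^ n)
      = fun y => ∑ i ∈ range (n + 1), ((-1 : ℝ) ^ (n - i) * n.choose i) * y ^ (2 * i) := by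
    funext y
    rw [sub_eq_add_neg, add_pow]
    exact sum_congr rfl fun i _ => by ring
  rw [hexpand, iteratedDeriv_fun_sum (fun i _ => by fun_prop)]
  refine sum_congr rfl fun i _ => ?_
  rw [iteratedDeriv_const_mul_field, iteratedDeriv_pow]
  ring

-- Terms with `p.2 > p.1` vanish through `p.1.choose p.2`, so the truncated exponent is harmless.
theorem legendrePoly_eq_sum_antidiagonal (n : ℕ) (x : ℝ) :
    legendrePoly n x = ∑ p ∈ antidiagonal n,
      (p.1.centralBinom / 4 ^ p.1 : ℝ) * p.1.choose p.2 * (2 * x) ^ (p.1 - p.2) * (-1) ^ p.2 := by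
  rw [legendrePoly, iteratedDeriv_sq_sub_one_pow, mul_sum,
    Nat.sum_antidiagonal_eq_sum_range_succ_mk]
  refine sum_congr rfl fun i hi => ?_
  obtain ⟨j, rfl⟩ : ∃ j, n = i + j := ⟨n - i, by simp at hi; omega⟩
  simp only [add_tsub_cancel_left]
  rcases le_or_gt j i with hji | hij
  · have hchoose :
        ((i + j).choose i : ℝ) * (2 * i).choose (i + j) = i.centralBinom * i.choose j := by
      rw [mul_comm]
      exact_mod_cast by rw [Nat.choose_mul (by omega), Nat.centralBinom,
        show 2 * i - i = i by omega, show i + j - i = j by omega]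
    have hpow : (2 : ℝ) ^ (i - j) * 2 ^ (i + j) = 4 ^ i := by
      rw [← pow_add, show i - j + (i + j) = 2 * i by omega, pow_mul]; norm_num
    rw [Nat.descFactorial_eq_factorial_mul_choose, show 2 * i - (i + j) = i - j by omega, mul_pow]
    have hf : ((i + j).factorial : ℝ) ≠ 0 := Nat.cast_ne_zero.mpr (Nat.factorial_ne_zero _)
    rw [← hpow]
    field_simp
    push_cast
    linear_combination (x ^ (i - j) * ((i + j).factorial : ℝ)) * hchoose
  · rw [Nat.descFactorial_eq_zero_iff_lt.mpr (by omega), Nat.choose_eq_zero_of_lt hij]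
    simp

theorem hasSum_sum_antidiagonal_of_summable {E : Type*} [AddCommMonoid E] [TopologicalSpace E]
    [ContinuousAdd E] [T3Space E] {f : ℕ × ℕ → E} {g : ℕ → E} {a : E} (hf : Summable f)
    (hrow : ∀ i, HasSum (fun j => f (i, j)) (g i)) (hg : HasSum g a) :
    HasSum (fun n => ∑ p ∈ antidiagonal n, f p) a := by
  have ha : HasSum f a := (hf.hasSum.prod_fiberwise hrow).unique hg ▸ hf.hasSum
  exact (HasAntidiagonal.sigmaAntidiagonalEquivProd.hasSum_iff.mpr ha).sigma
    fun n => (antidiagonal n).hasSum f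

theorem hasSum_mul_choose_mul_pow_mul_pow {R : Type*} [CommSemiring R] [TopologicalSpace R]
    (b u v : R) (i : ℕ) :
    HasSum (fun j => b * i.choose j * u ^ (i - j) * v ^ j) (b * (u + v) ^ i) := by
  convert hasSum_sum_of_ne_finset_zero (L := .unconditional ℕ) (s := range (i + 1))
    fun j hj => ?_ using 1
  · rw [add_comm, add_pow, mul_sum]
    exact sum_congr rfl fun j _ => by ring
  · simp [Nat.choose_eq_zero_of_lt (show i < j by simpa using hj)]

theorem hasSum_sum_antidiagonal_mul_choose_mul_pow_mul_pow {𝕜 : Type*} [RCLike 𝕜]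
    {b : ℕ → 𝕜} {u v s : 𝕜} (hb : Summable fun i => ‖b i‖ * (‖u‖ + ‖v‖) ^ i)
    (hs : HasSum (fun i => b i * (u + v) ^ i) s) :
    HasSum (fun n => ∑ p ∈ antidiagonal n, b p.1 * p.1.choose p.2 * u ^ (p.1 - p.2) * v ^ p.2)
      s := by
  refine hasSum_sum_antidiagonal_of_summable (Summable.of_norm ?_)
    (fun i => hasSum_mul_choose_mul_pow_mul_pow (b i) u v i) hs
  have hnorm : ∀ p : ℕ × ℕ, ‖b p.1 * p.1.choose p.2 * u ^ (p.1 - p.2) * v ^ p.2‖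
      = ‖b p.1‖ * p.1.choose p.2 * ‖u‖ ^ (p.1 - p.2) * ‖v‖ ^ p.2 := by
    intro p; simp only [norm_mul, norm_pow, RCLike.norm_natCast]
  have hrow := fun i => hasSum_mul_choose_mul_pow_mul_pow ‖b i‖ ‖u‖ ‖v‖ i
  rw [funext hnorm, summable_prod_of_nonneg fun p => by positivity]
  exact ⟨fun i => (hrow i).summable, by simpa only [(hrow _).tsum_eq] using hb⟩

open FormalMultilinearSeries (ofScalars ofScalars_apply_eq)

theorem mem_eball_zero_one_iff {E : Type*} [SeminormedAddCommGroup E] {y : E} :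
    y ∈ Metric.eball 0 1 ↔ ‖y‖ < 1 := by
  rw [← ENNReal.coe_one, Metric.eball_coe, mem_ball_zero_iff, NNReal.coe_one]

noncomputable def legendreGenFun (x : ℝ) (z : ℂ) : ℂ :=
  1 / (1 - 2 * x * z + z ^ 2) ^ (1 / 2 : ℂ)

theorem one_sub_two_mul_add_sq_mem_slitPlane {x : ℝ} (hx : |x| ≤ 1) {z : ℂ}
    (hz : ‖z‖ < 1) :
    1 - 2 * x * z + z ^ 2 ∈ Complex.slitPlane := by
  have hnorm : z.re ^ 2 + z.im ^ 2 < 1 := by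
    have := Complex.sq_norm z
    rw [Complex.normSq_apply] at this
    nlinarith [norm_nonneg z]
  obtain ⟨hx₁, hx₂⟩ := abs_le.mp hx
  rw [Complex.mem_slitPlane_iff]
  by_contra! h
  obtain ⟨hre, him⟩ := h
  simp only [Complex.add_re, Complex.sub_re, Complex.one_re, Complex.mul_re, Complex.add_im,
    Complex.sub_im, Complex.one_im, Complex.mul_im, pow_two, Complex.ofReal_re,
    Complex.ofReal_im] at hre him
  norm_num at hre him
  -- The imaginary part is `2 Im z (Re z - x)`, and on both of its zero lines the real part is > 0.
  rcases mul_eq_zero.mp (show z.im * (z.re - x) = 0 by linarith) with h | h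
  · have hs : z.re ^ 2 < 1 := by nlinarith
    have hs₁ : -1 < z.re := by nlinarith
    have hs₂ : z.re < 1 := by nlinarith
    rw [h] at hre
    nlinarith [mul_nonneg (sub_nonneg.mpr hx₂) (sq_nonneg (1 + z.re)),
      mul_nonneg (neg_le_iff_add_nonneg.mp hx₁) (sq_nonneg (1 - z.re)),
      mul_pos (sub_pos.mpr hs₂) (neg_lt_iff_pos_add.mp hs₁)]
  · nlinarith

theorem differentiableOn_legendreGenFun {x : ℝ} (hx : |x| ≤ 1) :
    DifferentiableOn ℂ (legendreGenFun x) (Metric.ball 0 1) := by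
  intro z hz
  have hq := one_sub_two_mul_add_sq_mem_slitPlane hx (mem_ball_zero_iff.mp hz)
  refine DifferentiableAt.differentiableWithinAt ?_
  refine (differentiableAt_const _).div ((by fun_prop : DifferentiableAt ℂ
    (fun z : ℂ => 1 - 2 * x * z + z ^ 2) z).cpow_const hq) ?_
  exact fun h => Complex.slitPlane_ne_zero hq ((Complex.cpow_eq_zero_iff _ _).mp h).1

theorem hasSum_legendrePoly_mul_pow_of_norm_le {x : ℝ} (hx : |x| ≤ 1) {z : ℂ}
    (hz : ‖z‖ ≤ 1 / 3) :
    HasSum (fun n => (legendrePoly n x : ℂ) * z ^ n) (legendreGenFun x z) := by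
  set b : ℕ → ℂ := fun i => Ring.choose ((1 / 2 : ℂ) + i - 1) i
  have hB : HasFPowerSeriesOnBall (fun w => 1 / (1 - w) ^ (1 / 2 : ℂ)) (ofScalars ℂ b) 0 1 :=
    Complex.one_div_one_sub_cpow_hasFPowerSeriesOnBall_zero (1 / 2)
  set u : ℂ := 2 * x * z
  set v : ℂ := -z ^ 2
  have huv : ‖u‖ + ‖v‖ < 1 := by
    simp only [u, v, norm_mul, norm_neg, norm_pow, Complex.norm_real, Real.norm_eq_abs]
    norm_num
    nlinarith [norm_nonneg z, abs_nonneg x]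
  have hb : Summable fun i => ‖b i‖ * (‖u‖ + ‖v‖) ^ i := by
    have hmem : ((‖u‖ + ‖v‖ : ℝ) : ℂ) ∈ Metric.eball 0 1 := by
      rwa [mem_eball_zero_one_iff, Complex.norm_real, Real.norm_of_nonneg (by positivity)]
    replace hmem := Metric.eball_subset_eball hB.r_le hmem
    refine ((ofScalars ℂ b).summable_norm_apply hmem).congr fun i => ?_
    rw [ofScalars_apply_eq, smul_eq_mul, norm_mul, norm_pow,
      Complex.norm_real, Real.norm_of_nonneg (by positivity)]
  have hs : HasSum (fun i => b i * (u + v) ^ i) (legendreGenFun x z) := by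
    have hmem := mem_eball_zero_one_iff.mpr ((norm_add_le u v).trans_lt huv)
    have hgen : legendreGenFun x z = 1 / (1 - (u + v)) ^ (1 / 2 : ℂ) := by
      simp only [legendreGenFun, u, v]; ring_nf
    rw [hgen]
    simpa only [ofScalars_apply_eq, smul_eq_mul, zero_add] using hB.hasSum hmem
  refine (hasSum_sum_antidiagonal_mul_choose_mul_pow_mul_pow hb hs).congr_fun fun n => ?_
  rw [legendrePoly_eq_sum_antidiagonal]
  push_cast
  rw [sum_mul]
  refine sum_congr rfl fun p hp => ?_
  rw [HasAntidiagonal.mem_antidiagonal] at hp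
  simp only [b, Ring.choose_half_add_natCast_sub_one]
  rcases le_or_gt p.2 p.1 with h | h
  · rw [← hp]
    simp only [u, v]
    rw [show (p.1 + p.2) = (p.1 - p.2) + 2 * p.2 by omega]
    ring
  · simp [Nat.choose_eq_zero_of_lt h]

theorem hasFPowerSeriesAt_legendreGenFun {x : ℝ} (hx : |x| ≤ 1) :
    HasFPowerSeriesAt (legendreGenFun x)
      (ofScalars ℂ fun n => (legendrePoly n x : ℂ)) 0 := by
  have hthird := hasSum_legendrePoly_mul_pow_of_norm_le hx (z := 1 / 3) (by norm_num)
  refine ⟨(3⁻¹ : NNReal), FormalMultilinearSeries.le_radius_of_tendsto _ (l := 0) ?_,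
    by norm_num, fun {y} hy => ?_⟩
  · simpa [norm_mul, norm_pow] using hthird.summable.tendsto_atTop_zero.norm
  · rw [Metric.eball_coe, mem_ball_zero_iff] at hy
    simpa [ofScalars_apply_eq, mul_comm] using
      hasSum_legendrePoly_mul_pow_of_norm_le hx (by simpa using hy.le)

theorem hasFPowerSeriesOnBall_legendreGenFun {x : ℝ} (hx : |x| ≤ 1) :
    HasFPowerSeriesOnBall (legendreGenFun x)
      (ofScalars ℂ fun n => (legendrePoly n x : ℂ)) 0 1 := by
  have hR : ∀ R : NNReal, 0 < R → R < 1 → HasFPowerSeriesOnBall (legendreGenFun x)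
      (ofScalars ℂ fun n => (legendrePoly n x : ℂ)) 0 R := by
    intro R hR₀ hR₁
    have hc := ((differentiableOn_legendreGenFun hx).mono
      (Metric.closedBall_subset_ball (by exact_mod_cast hR₁))).hasFPowerSeriesOnBall hR₀
    rwa [hc.hasFPowerSeriesAt.eq_formalMultilinearSeries
      (hasFPowerSeriesAt_legendreGenFun hx)] at hc
  refine ⟨ENNReal.le_of_forall_pos_nnreal_lt fun R hR₀ hR₁ =>
    (hR R hR₀ (by exact_mod_cast hR₁)).r_le, one_pos, fun {y} hy => ?_⟩
  rw [mem_eball_zero_one_iff] at hy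
  obtain ⟨R, hyR, hR₁⟩ := exists_between (show ‖y‖₊ < 1 from hy)
  exact (hR R (pos_of_gt hyR) hR₁).hasSum (by
    rwa [Metric.eball_coe, mem_ball_zero_iff])

theorem hasSum_legendrePoly_mul_pow {x h : ℝ} (hx : |x| ≤ 1) (hh : |h| < 1) :
    HasSum (fun n => legendrePoly n x * h ^ n) (1 / √(1 - 2 * x * h + h ^ 2)) ∧
      Summable fun n => |legendrePoly n x * h ^ n| := by
  have hF := hasFPowerSeriesOnBall_legendreGenFun hx
  have hmem : (h : ℂ) ∈ Metric.eball 0 1 := by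
    rwa [mem_eball_zero_one_iff, Complex.norm_real, Real.norm_eq_abs]
  have hq : 0 ≤ 1 - 2 * x * h + h ^ 2 := by
    nlinarith [sq_nonneg (h - x), sq_abs x, abs_nonneg x]
  have hval : legendreGenFun x h = ((1 / √(1 - 2 * x * h + h ^ 2) : ℝ) : ℂ) := by
    rw [legendreGenFun, Real.sqrt_eq_rpow, Complex.ofReal_div, Complex.ofReal_one,
      Complex.ofReal_cpow hq]
    push_cast
    ring_nf
  constructor
  · have := hF.hasSum hmem
    rw [zero_add, hval] at this
    refine Complex.hasSum_ofReal.mp ?_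
    simpa only [ofScalars_apply_eq, smul_eq_mul, ← Complex.ofReal_pow,
      ← Complex.ofReal_mul] using this
  · refine ((ofScalars ℂ fun n => (legendrePoly n x : ℂ)).summable_norm_apply
      (Metric.eball_subset_eball hF.r_le hmem)).congr fun n => ?_
    rw [ofScalars_apply_eq, smul_eq_mul, ← Complex.ofReal_pow,
      ← Complex.ofReal_mul, Complex.norm_real, Real.norm_eq_abs]

theorem abs_cos_mul_cos_add_sin_mul_sin_mul_cos_le_one (θ θ' φ : ℝ) :
    |cos θ * cos θ' + sin θ * sin θ' * cos φ| ≤ 1 := by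
  have hφ : (sin θ' * cos φ) ^ 2 ≤ sin θ' ^ 2 := by
    nlinarith [cos_sq_le_one φ, sq_nonneg (sin θ')]
  rw [abs_le]
  constructor <;> nlinarith [sq_nonneg (cos θ + cos θ'), sq_nonneg (sin θ + sin θ' * cos φ),
    sq_nonneg (cos θ - cos θ'), sq_nonneg (sin θ - sin θ' * cos φ), sin_sq_add_cos_sq θ,
    sin_sq_add_cos_sq θ']

theorem spherical_dist_sq (r r' θ θ' φ φ' : ℝ) :
    (r * sin θ * cos φ - r' * sin θ' * cos φ') ^ 2
      + (r * sin θ * sin φ - r' * sin θ' * sin φ') ^ 2 + (r * cos θ - r' * cos θ') ^ 2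
      = r ^ 2 - 2 * r * r' * (cos θ * cos θ' + sin θ * sin θ' * cos (φ - φ')) + r' ^ 2 := by
  rw [cos_sub]
  linear_combination (r ^ 2 * sin θ ^ 2) * sin_sq_add_cos_sq φ + r ^ 2 * sin_sq_add_cos_sq θ
    + (r' ^ 2 * sin θ' ^ 2) * sin_sq_add_cos_sq φ' + r' ^ 2 * sin_sq_add_cos_sq θ'

theorem stmt18_general (r rs θ θs φ φs : ℝ) (hr : 0 < r) (hrs : r < rs) :
    HasSum (fun n : ℕ => r^n / rs^(n+1) *
        legendrePoly n (Real.cos θ * Real.cos θs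
          + Real.sin θ * Real.sin θs * Real.cos (φ - φs)))
      (1 / Real.sqrt ((r * Real.sin θ * Real.cos φ - rs * Real.sin θs * Real.cos φs)^2
          + (r * Real.sin θ * Real.sin φ - rs * Real.sin θs * Real.sin φs)^2
          + (r * Real.cos θ - rs * Real.cos θs)^2)) ∧
    Summable (fun n : ℕ => |r^n / rs^(n+1) *
        legendrePoly n (Real.cos θ * Real.cos θs
          + Real.sin θ * Real.sin θs * Real.cos (φ - φs))|) := by
  have hrs₀ : 0 < rs := hr.trans hrs
  have hh : |r / rs| < 1 := by
    rwa [abs_of_pos (div_pos hr hrs₀), div_lt_one hrs₀]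
  have hx := abs_cos_mul_cos_add_sin_mul_sin_mul_cos_le_one θ θs (φ - φs)
  rw [spherical_dist_sq]
  generalize cos θ * cos θs + sin θ * sin θs * cos (φ - φs) = x at hx ⊢
  obtain ⟨hsum, habs⟩ := hasSum_legendrePoly_mul_pow hx hh
  have hterm : ∀ n : ℕ, r ^ n / rs ^ (n + 1) * legendrePoly n x
      = legendrePoly n x * (r / rs) ^ n / rs := by
    intro n; rw [div_pow, pow_succ]; field_simp
  have hval : 1 / √(r ^ 2 - 2 * r * rs * x + rs ^ 2)
      = 1 / √(1 - 2 * x * (r / rs) + (r / rs) ^ 2) / rs := by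
    rw [show r ^ 2 - 2 * r * rs * x + rs ^ 2 = rs ^ 2 * (1 - 2 * x * (r / rs) + (r / rs) ^ 2) by
      field_simp; ring, Real.sqrt_mul (sq_nonneg rs), Real.sqrt_sq hrs₀.le]
    field_simp
  simp_rw [hterm, hval, abs_div, abs_of_pos hrs₀]
  exact ⟨hsum.div_const rs, habs.div_const rs⟩

/-- Laplace expansion of the Newtonian potential: for `0 < r < r*` and points
`𝐫, 𝐫*` with spherical coordinates `(r,θ,φ)` and `(r*,θ*,φ*)`,
`1/‖𝐫−𝐫*‖ = Σ_{n=0}^∞ (rⁿ/(r*)^{n+1}) P_n(cosθ cosθ* + sinθ sinθ* cos(φ−φ*))`,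
with absolute convergence. -/
theorem stmt18 (r rs θ θs φ φs : ℝ) (hr : 0 < r) (hrs : r < rs)
    (hθ : θ ∈ Set.Icc 0 π) (hθs : θs ∈ Set.Icc 0 π) :
    HasSum (fun n : ℕ => r^n / rs^(n+1) *
        legendrePoly n (Real.cos θ * Real.cos θs
          + Real.sin θ * Real.sin θs * Real.cos (φ - φs)))
      (1 / Real.sqrt ((r * Real.sin θ * Real.cos φ - rs * Real.sin θs * Real.cos φs)^2
          + (r * Real.sin θ * Real.sin φ - rs * Real.sin θs * Real.sin φs)^2
          + (r * Real.cos θ - rs * Real.cos θs)^2)) ∧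
    Summable (fun n : ℕ => |r^n / rs^(n+1) *
        legendrePoly n (Real.cos θ * Real.cos θs
          + Real.sin θ * Real.sin θs * Real.cos (φ - φs))|) :=
  stmt18_general r rs θ θs φ φs hr hrs
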